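/- arXiv:1710.06963 — 2 statements merged into one kernel-verified Lean document; each statement's English description precedes it below -/
import Mathlib

section
/- Let V be a real normed vector space, d a finite set of users, and for each user k ∈ d let w_k ∈ ℝ be a weight and Δ_k ∈ V an update vector. Fix q ∈ (0,1], let W = Σ_{k∈d} w_k, assume qW > 0, and define the fixed-denominator estimator f̃_f(C) = (Σ_{k∈C} w_k Δ_k)/(qW) for C ⊆ d. If ‖w_k Δ_k‖ ≤ S for all k ∈ d, then for every C ⊆ d and every k ∈ d \ C, ‖f̃_f(C ∪ {k}) − f̃_f(C)‖ ≤ S/(qW); that is, the sensitivity of f̃_f is at most S/(qW). -/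
/-- **Sensitivity of the fixed-denominator estimator.**
Let `V` be a real normed vector space, `d` a finite set of users with weights `w k : ℝ` and
update vectors `Δ k : V`. Fix `q ∈ (0,1]`, let `W = ∑ k ∈ d, w k`, assume `q * W > 0`, and
define the fixed-denominator estimator `f̃_f(C) = (q*W)⁻¹ • ∑ k ∈ C, w k • Δ k`.
If `‖w k • Δ k‖ ≤ S` for all `k ∈ d`, then for every `C ⊆ d` and `k ∈ d \ C`,
`‖f̃_f(C ∪ {k}) - f̃_f(C)‖ ≤ S / (q*W)`. -/
theorem fixed_denominator_estimator_sensitivity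
    {V : Type*} [NormedAddCommGroup V] [NormedSpace ℝ V]
    {ι : Type*} [DecidableEq ι] (d : Finset ι) (w : ι → ℝ) (Δ : ι → V)
    (q : ℝ) (hq0 : 0 < q) (hq1 : q ≤ 1)
    (W : ℝ) (hW : W = ∑ k ∈ d, w k) (hqW : 0 < q * W)
    (S : ℝ) (hS : ∀ k ∈ d, ‖w k • Δ k‖ ≤ S)
    (fe : Finset ι → V)
    (hfe : ∀ C : Finset ι, fe C = (q * W)⁻¹ • ∑ k ∈ C, w k • Δ k) :
    ∀ C : Finset ι, C ⊆ d → ∀ k ∈ d, k ∉ C →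
      ‖fe (insert k C) - fe C‖ ≤ S / (q * W) := by
  intro C hC k hk hkC
  rw [hfe, hfe, Finset.sum_insert hkC, ← smul_sub, add_sub_cancel_right, norm_smul,
    Real.norm_eq_abs, abs_of_pos (inv_pos.mpr hqW), div_eq_inv_mul]
  exact mul_le_mul_of_nonneg_left (hS k hk) (inv_nonneg.mpr hqW.le)
end

section
/- Let V be a real normed vector space, d a finite set of users, and for each user k ∈ d let w_k ∈ [0,1] be a weight and Δ_k ∈ V an update vector with ‖Δ_k‖ ≤ S. Fix q ∈ (0,1] and W_min > 0, and define the clipped-denominator estimator f̃_c(C) = (Σ_{k∈C} w_k Δ_k)/max(qW_min, Σ_{k∈C} w_k) for C ⊆ d. Then for every C ⊆ d and every k ∈ d \ C, ‖f̃_c(C ∪ {k}) − f̃_c(C)‖ ≤ 2S/(qW_min); that is, the sensitivity of f̃_c is at most 2S/(qW_min). -/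
/-- **Sensitivity of the clipped-denominator estimator.**
Let `V` be a real normed vector space, `d` a finite set of users with weights `w k ∈ [0,1]`
and update vectors `Δ k` satisfying `‖Δ k‖ ≤ S`. Fix `q ∈ (0,1]` and `W_min > 0`, and define
`f̃_c(C) = (max (q*W_min) (∑ k ∈ C, w k))⁻¹ • ∑ k ∈ C, w k • Δ k`.
Then for every `C ⊆ d` and `k ∈ d \ C`,
`‖f̃_c(C ∪ {k}) - f̃_c(C)‖ ≤ 2*S / (q*W_min)`. -/
theorem clipped_denominator_estimator_sensitivity
    {V : Type*} [NormedAddCommGroup V] [NormedSpace ℝ V]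
    {ι : Type*} [DecidableEq ι] (d : Finset ι) (w : ι → ℝ) (Δ : ι → V)
    (hw0 : ∀ k ∈ d, 0 ≤ w k) (hw1 : ∀ k ∈ d, w k ≤ 1)
    (S : ℝ) (hS : ∀ k ∈ d, ‖Δ k‖ ≤ S)
    (q : ℝ) (hq0 : 0 < q) (hq1 : q ≤ 1)
    (Wmin : ℝ) (hWmin : 0 < Wmin)
    (fc : Finset ι → V)
    (hfc : ∀ C : Finset ι,
      fc C = (max (q * Wmin) (∑ k ∈ C, w k))⁻¹ • ∑ k ∈ C, w k • Δ k) :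
    ∀ C : Finset ι, C ⊆ d → ∀ k ∈ d, k ∉ C →
      ‖fc (insert k C) - fc C‖ ≤ 2 * S / (q * Wmin) := by
  intro C hC k hk hkC
  have hS0 : (0:ℝ) ≤ S := le_trans (norm_nonneg _) (hS k hk)
  have hwk0 : 0 ≤ w k := hw0 k hk
  have hwk1 : w k ≤ 1 := hw1 k hk
  rw [hfc, hfc, Finset.sum_insert hkC, Finset.sum_insert hkC]
  set W := ∑ j ∈ C, w j with hWdef
  set Sv := ∑ j ∈ C, w j • Δ j with hSvdef
  have hW0 : 0 ≤ W := Finset.sum_nonneg fun j hj => hw0 j (hC hj)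
  set a := q * Wmin with ha
  have ha0 : 0 < a := mul_pos hq0 hWmin
  set D := max a W with hD
  set D' := max a (w k + W) with hD'
  have hD0 : 0 < D := lt_max_of_lt_left ha0
  have hD'0 : 0 < D' := lt_max_of_lt_left ha0
  have hDD' : D ≤ D' := max_le_max le_rfl (by linarith)
  have hWD : W ≤ D := le_max_right _ _
  have haD' : a ≤ D' := le_max_left _ _
  have hDiff : D' - D ≤ w k := by
    rcases le_or_gt (w k + W) a with h | h
    · have h1 : D' = a := max_eq_left h
      have h2 : a ≤ D := le_max_left _ _
      linarith
    · have h1 : D' = w k + W := max_eq_right h.le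
      linarith
  have hDiff0 : 0 ≤ D' - D := by linarith
  have hnormS : ‖Sv‖ ≤ W * S := by
    calc ‖Sv‖ ≤ ∑ j ∈ C, ‖w j • Δ j‖ := norm_sum_le _ _
      _ ≤ ∑ j ∈ C, w j * S := by
          apply Finset.sum_le_sum
          intro j hj
          rw [norm_smul, Real.norm_eq_abs, abs_of_nonneg (hw0 j (hC hj))]
          exact mul_le_mul_of_nonneg_left (hS j (hC hj)) (hw0 j (hC hj))
      _ = W * S := by rw [hWdef, Finset.sum_mul]
  have key : (D')⁻¹ • (w k • Δ k + Sv) - D⁻¹ • Sv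
      = ((D')⁻¹ - D⁻¹) • Sv + (D')⁻¹ • (w k • Δ k) := by
    rw [smul_add, sub_smul]; abel
  rw [key]
  have hinv : (D')⁻¹ ≤ D⁻¹ := inv_anti₀ hD0 hDD'
  have step : ‖((D')⁻¹ - D⁻¹) • Sv + (D')⁻¹ • (w k • Δ k)‖
      ≤ (D⁻¹ - (D')⁻¹) * ‖Sv‖ + (D')⁻¹ * (w k * ‖Δ k‖) := by
    refine le_trans (norm_add_le _ _) ?_
    have e1 : ‖((D')⁻¹ - D⁻¹) • Sv‖ = (D⁻¹ - (D')⁻¹) * ‖Sv‖ := by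
      rw [norm_smul, Real.norm_eq_abs, abs_sub_comm, abs_of_nonneg (by linarith)]
    have e2 : ‖(D')⁻¹ • (w k • Δ k)‖ = (D')⁻¹ * (w k * ‖Δ k‖) := by
      rw [norm_smul, norm_smul, Real.norm_eq_abs, Real.norm_eq_abs,
        abs_of_nonneg (by positivity : (0:ℝ) ≤ (D')⁻¹), abs_of_nonneg hwk0]
    rw [e1, e2]
  refine le_trans step ?_
  have t1 : (D⁻¹ - (D')⁻¹) * ‖Sv‖ ≤ S / a := by
    have h1 : D⁻¹ - (D')⁻¹ = (D' - D) / (D * D') := by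
      field_simp
    rw [h1, div_mul_eq_mul_div, div_le_div_iff₀ (by positivity) ha0]
    nlinarith [norm_nonneg Sv, mul_le_mul hnormS haD' ha0.le (by positivity : (0:ℝ) ≤ W * S),
      mul_nonneg (mul_nonneg hDiff0 (norm_nonneg Sv)) ha0.le,
      mul_le_mul_of_nonneg_right (mul_le_mul hDiff hnormS (norm_nonneg Sv) hwk0) ha0.le,
      mul_le_mul_of_nonneg_left hWD hS0, mul_le_mul_of_nonneg_right hwk1 (mul_nonneg hW0 hS0),
      mul_le_mul_of_nonneg_right haD' (mul_nonneg hD0.le hS0),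
      mul_le_mul_of_nonneg_right (mul_le_mul_of_nonneg_right hWD hS0) hD'0.le]
  have t2 : (D')⁻¹ * (w k * ‖Δ k‖) ≤ S / a := by
    rw [inv_mul_eq_div]
    apply div_le_div₀ hS0 _ ha0 haD'
    calc w k * ‖Δ k‖ ≤ 1 * S := mul_le_mul hwk1 (hS k hk) (norm_nonneg _) zero_le_one
      _ = S := one_mul S
  calc (D⁻¹ - (D')⁻¹) * ‖Sv‖ + (D')⁻¹ * (w k * ‖Δ k‖) ≤ S / a + S / a := add_le_add t1 t2
    _ = 2 * S / a := by ring
end
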